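/- arXiv:2204.00905 — 5 statements merged into one kernel-verified Lean document; each statement's English description precedes it below -/
import Mathlib

section
/- Let R be a finite commutative ring with maximal ideals m_1, …, m_u, and for each j let s_j be the stationary index of m_j (the least k with m_j^k = m_j^(k+1)). Then the ideals m_j^(s_j) are pairwise coprime, their intersection is zero, and the map a ↦ (a + m_1^(s_1), …, a + m_u^(s_u)) is a ring isomorphism R ≅ R/m_1^(s_1) × ⋯ × R/m_u^(s_u). -/
/-- The stationary index of an ideal: the least `k` with `I^k = I^(k+1)`. -/
noncomputable def stationaryIndex {R : Type*} [CommRing R] (I : Ideal R) : ℕ :=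
  sInf {k : ℕ | I ^ k = I ^ (k + 1)}

/-!
In an Artinian ring the descending chain `I ⊇ I² ⊇ ⋯` stabilises, so `stationaryIndex I` is
attained and `I ^ n = I ^ stationaryIndex I` for all larger `n`. Taking `n` beyond every stationary
index and beyond the nilpotency index of the nilradical, the intersection of the `m ^ stationaryIndex m`
becomes `⨅ m, m ^ n = (nilradical R) ^ n = ⊥`. Powers of distinct maximal ideals are coprime, so the
Chinese remainder theorem finishes the proof.
-/

namespace Ideal

variable {R : Type*} [CommRing R]

theorem exists_pow_eq_pow_succ [IsArtinianRing R] (I : Ideal R) : ∃ k, I ^ k = I ^ (k + 1) := by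
  obtain ⟨k, hk⟩ := IsArtinian.monotone_stabilizes
    ⟨fun n => OrderDual.toDual (I ^ n), fun _ _ h => Ideal.pow_le_pow_right h⟩
  exact ⟨k, hk (k + 1) k.le_succ⟩

theorem pow_stationaryIndex_succ [IsArtinianRing R] (I : Ideal R) :
    I ^ (stationaryIndex I + 1) = I ^ stationaryIndex I :=
  (Nat.sInf_mem (exists_pow_eq_pow_succ I)).symm

theorem pow_eq_pow_stationaryIndex [IsArtinianRing R] (I : Ideal R) {n : ℕ}
    (hn : stationaryIndex I ≤ n) : I ^ n = I ^ stationaryIndex I := by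
  induction n, hn using Nat.le_induction with
  | base => rfl
  | succ n _ ih => rw [pow_succ, ih, ← pow_succ, pow_stationaryIndex_succ]

variable (R) in
theorem iInf_pow_stationaryIndex_eq_bot [IsArtinianRing R] :
    ⨅ I : {I : Ideal R // I.IsMaximal}, (I : Ideal R) ^ stationaryIndex (I : Ideal R) = ⊥ := by
  obtain ⟨n, hn⟩ := IsArtinianRing.isNilpotent_nilradical (R := R)
  obtain ⟨M, hM⟩ := Finite.exists_le fun I : MaximalSpectrum R => stationaryIndex I.asIdeal
  have hstable (I : MaximalSpectrum R) :
      I.asIdeal ^ stationaryIndex I.asIdeal = I.asIdeal ^ max n M :=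
    (pow_eq_pow_stationaryIndex _ ((hM I).trans (le_max_right n M))).symm
  refine le_bot_iff.mp ?_
  calc ⨅ I : {I : Ideal R // I.IsMaximal}, (I : Ideal R) ^ stationaryIndex (I : Ideal R)
      = ⨅ I : MaximalSpectrum R, I.asIdeal ^ stationaryIndex I.asIdeal :=
        (MaximalSpectrum.equivSubtype R).iInf_comp.symm
    _ = nilradical R ^ max n M := by
        rw [iInf_congr hstable, IsArtinianRing.nilradical_pow_eq_iInf]
    _ ≤ nilradical R ^ n := Ideal.pow_le_pow_right (le_max_left n M)
    _ = ⊥ := hn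

theorem bijective_pi_quotient_mk {ι : Type*} [Finite ι] {f : ι → Ideal R}
    (hf : Pairwise (Function.onFun IsCoprime f)) (hbot : ⨅ i, f i = ⊥) :
    Function.Bijective (RingHom.pi fun i => Ideal.Quotient.mk (f i)) := by
  refine ⟨?_, ?_⟩
  · rw [RingHom.injective_iff_ker_eq_bot, ker_Pi_Quotient_mk, hbot]
  · have hcomp : RingHom.pi (fun i => Ideal.Quotient.mk (f i)) =
        (quotientInfToPiQuotient f).comp (Ideal.Quotient.mk _) := rfl
    rw [hcomp, RingHom.coe_comp]
    exact (quotientInfToPiQuotient_surj hf).comp Ideal.Quotient.mk_surjective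

end Ideal

theorem crt_decomposition_finite_ring
    (R : Type*) [CommRing R] [Fintype R] :
    (∀ I J : Ideal R, I.IsMaximal → J.IsMaximal → I ≠ J →
      I ^ stationaryIndex I ⊔ J ^ stationaryIndex J = ⊤) ∧
    (⨅ I : {I : Ideal R // I.IsMaximal}, (I : Ideal R) ^ stationaryIndex (I : Ideal R) = ⊥) ∧
    Function.Bijective
      (Pi.ringHom (fun I : {I : Ideal R // I.IsMaximal} =>
        Ideal.Quotient.mk ((I : Ideal R) ^ stationaryIndex (I : Ideal R)))) := by
  have hcoprime (I J : Ideal R) (hI : I.IsMaximal) (hJ : J.IsMaximal) (hne : I ≠ J) :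
      IsCoprime (I ^ stationaryIndex I) (J ^ stationaryIndex J) :=
    (Ideal.isCoprime_of_isMaximal hne).pow
  have hbot := Ideal.iInf_pow_stationaryIndex_eq_bot R
  refine ⟨fun I J hI hJ hne => Ideal.isCoprime_iff_sup_eq.mp (hcoprime I J hI hJ hne), hbot,
    Ideal.bijective_pi_quotient_mk ?_ hbot⟩
  exact fun I J hne => hcoprime I J I.2 J.2 (Subtype.coe_ne_coe.mpr hne)
end

section
/- In the ring R = F_2[u_1,…,u_k]/(u_1²,…,u_k²), the annihilator (equivalently, the dual with respect to the bilinear form [x,y] = xy) of the ideal generated by u_{i_1},…,u_{i_s} is the principal ideal generated by the product u_{i_1}u_{i_2}⋯u_{i_s}, and this ideal has cardinality 2^(2^(k−s)). -/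
/-- The ring `F₂[u₁,…,u_k]/(u₁²,…,u_k²)`. -/
def Rk (k : ℕ) : Type :=
  MvPolynomial (Fin k) (ZMod 2) ⧸
    Ideal.span {f : MvPolynomial (Fin k) (ZMod 2) | ∃ i, f = MvPolynomial.X i ^ 2}

noncomputable instance (k : ℕ) : CommRing (Rk k) := Ideal.Quotient.commRing _

/-- The class of the variable `uᵢ` in `Rk k`. -/
noncomputable def uvar (k : ℕ) (i : Fin k) : Rk k :=
  Ideal.Quotient.mk _ (MvPolynomial.X i)

/-!
The squarefree monomials `u_S = ∏ i ∈ S, u_i` form a basis of `R[u_i]/(u_i²)`, and the coordinate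
of `x * u_T` at `S` is the coordinate of `x` at `S \ T` if `T ⊆ S`, and `0` otherwise. Hence `x`
kills every `u_i` with `i ∈ T` iff its coordinates vanish off the supersets of `T`, and the same
condition describes the ideal `(u_T)`; its elements are the free choices of coordinates on the
`2^(k - |T|)` supersets of `T`.
-/

open MvPolynomial Finset

noncomputable section

namespace Finset

variable {σ : Type*}

def indicatorExponent (S : Finset σ) : σ →₀ ℕ := ∑ i ∈ S, Finsupp.single i 1

theorem indicatorExponent_apply [DecidableEq σ] (S : Finset σ) (j : σ) :
    S.indicatorExponent j = if j ∈ S then 1 else 0 := by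
  simp [indicatorExponent, Finsupp.finsetSum_apply, Finsupp.single_apply]

theorem indicatorExponent_le_iff {S T : Finset σ} :
    T.indicatorExponent ≤ S.indicatorExponent ↔ T ⊆ S := by
  classical
  simp only [Finsupp.le_def, indicatorExponent_apply, subset_iff]
  refine forall_congr' fun j => ?_
  split_ifs <;> simp_all

theorem indicatorExponent_injective : Function.Injective (indicatorExponent (σ := σ)) :=
  fun _ _ h => Subset.antisymm (indicatorExponent_le_iff.mp h.le) (indicatorExponent_le_iff.mp h.ge)

theorem indicatorExponent_sub [DecidableEq σ] (S T : Finset σ) :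
    S.indicatorExponent - T.indicatorExponent = (S \ T).indicatorExponent := by
  ext j
  simp only [Finsupp.tsub_apply, indicatorExponent_apply, mem_sdiff]
  split_ifs <;> simp_all

theorem not_single_two_le_indicatorExponent (S : Finset σ) (i : σ) :
    ¬ Finsupp.single i 2 ≤ S.indicatorExponent := by
  classical
  rw [Finsupp.single_le_iff, indicatorExponent_apply]
  split_ifs <;> omega

theorem eq_indicatorExponent_support {d : σ →₀ ℕ} (h : ∀ i, d i ≤ 1) :
    d = d.support.indicatorExponent := by
  classical
  ext j
  have := h j
  simp only [indicatorExponent_apply, Finsupp.mem_support_iff]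
  split_ifs <;> omega

theorem natCard_supersets [Fintype σ] [DecidableEq σ] (T : Finset σ) :
    Nat.card {S : Finset σ | T ⊆ S} = 2 ^ (Fintype.card σ - #T) := by
  rw [Nat.card_eq_card_toFinset, Set.toFinset_ofPred,
    show ({S | T ⊆ S} : Finset (Finset σ)) = Icc T univ by ext; simp [subset_univ],
    card_Icc_finset (subset_univ T), card_univ]

end Finset

theorem MvPolynomial.prod_X_eq_monomial {σ R : Type*} [CommSemiring R] (S : Finset σ) :
    ∏ i ∈ S, (X i : MvPolynomial σ R) = monomial S.indicatorExponent 1 := by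
  rw [indicatorExponent, monomial_sum_one]
  rfl

variable (σ R : Type*) [CommRing R]

def squaresIdeal : Ideal (MvPolynomial σ R) := Ideal.span {f | ∃ i, f = X i ^ 2}

abbrev SquarefreeQuotient := MvPolynomial σ R ⧸ squaresIdeal σ R

variable {σ R}

theorem mem_squaresIdeal_iff {p : MvPolynomial σ R} :
    p ∈ squaresIdeal σ R ↔ ∀ d ∈ p.support, ∃ i, Finsupp.single i 2 ≤ d := by
  have : {f : MvPolynomial σ R | ∃ i, f = X i ^ 2} =
      (fun d => monomial d 1) '' Set.range fun i => Finsupp.single i 2 := by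
    ext f
    simp [X_pow_eq_monomial, eq_comm]
  rw [squaresIdeal, this, mem_ideal_span_monomial_image]
  simp

theorem coeff_indicatorExponent_eq_zero_of_mem {p : MvPolynomial σ R} (hp : p ∈ squaresIdeal σ R)
    (S : Finset σ) : coeff S.indicatorExponent p = 0 := by
  by_contra h
  obtain ⟨i, hi⟩ := mem_squaresIdeal_iff.mp hp _ (mem_support_iff.mpr h)
  exact S.not_single_two_le_indicatorExponent i hi

namespace SquarefreeQuotient

abbrev var (i : σ) : SquarefreeQuotient σ R := Ideal.Quotient.mk _ (X i)

/-- The coefficient of `∏ i ∈ S, X i`; it vanishes on `squaresIdeal`, whose elements only involve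
monomials divisible by some `X i ^ 2`. -/
def coord (S : Finset σ) : Module.Dual R (SquarefreeQuotient σ R) :=
  Submodule.liftQ ((squaresIdeal σ R).restrictScalars R) (lcoeff R S.indicatorExponent)
      (fun _ hp => coeff_indicatorExponent_eq_zero_of_mem hp S) ∘ₗ
    (Submodule.Quotient.restrictScalarsEquiv R (squaresIdeal σ R)).symm.toLinearMap

theorem coord_mk (S : Finset σ) (p : MvPolynomial σ R) :
    coord S (Ideal.Quotient.mk _ p) = coeff S.indicatorExponent p :=
  rfl

theorem prod_var_eq_mk (S : Finset σ) :
    ∏ i ∈ S, var i = Ideal.Quotient.mk (squaresIdeal σ R) (monomial S.indicatorExponent 1) := by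
  rw [← prod_X_eq_monomial, map_prod]

theorem coord_prod_var [DecidableEq σ] (S T : Finset σ) :
    coord S (∏ i ∈ T, var i : SquarefreeQuotient σ R) = if T = S then 1 else 0 := by
  simp only [prod_var_eq_mk, coord_mk, coeff_monomial, indicatorExponent_injective.eq_iff]

theorem coord_mul_prod_var [DecidableEq σ] (x : SquarefreeQuotient σ R) (S T : Finset σ) :
    coord S (x * ∏ i ∈ T, var i) = if T ⊆ S then coord (S \ T) x else 0 := by
  obtain ⟨p, rfl⟩ := Ideal.Quotient.mk_surjective x
  simp only [prod_var_eq_mk, ← map_mul, coord_mk, coeff_mul_monomial', indicatorExponent_le_iff,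
    indicatorExponent_sub, mul_one]

theorem eq_of_coord_eq {x y : SquarefreeQuotient σ R} (h : ∀ S, coord S x = coord S y) : x = y := by
  obtain ⟨p, rfl⟩ := Ideal.Quotient.mk_surjective x
  obtain ⟨q, rfl⟩ := Ideal.Quotient.mk_surjective y
  refine Ideal.Quotient.eq.mpr (mem_squaresIdeal_iff.mpr fun d hd => ?_)
  by_contra! hsq
  have hd' := mem_support_iff.mp hd
  rw [eq_indicatorExponent_support (d := d) fun i => by simpa [Finsupp.single_le_iff] using hsq i,
    coeff_sub, sub_ne_zero] at hd'
  exact hd' (h _)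

theorem finite_coord_ne_zero (x : SquarefreeQuotient σ R) : {S | coord S x ≠ 0}.Finite := by
  obtain ⟨p, rfl⟩ := Ideal.Quotient.mk_surjective x
  exact (p.support.finite_toSet.preimage indicatorExponent_injective.injOn).subset
    fun S hS => mem_support_iff.mpr hS

theorem dualBases_prod_var :
    Module.DualBases (fun S => ∏ i ∈ S, var i : Finset σ → SquarefreeQuotient σ R) coord := by
  classical
  exact ⟨fun S => by simp [coord_prod_var], fun S T h => by simp [coord_prod_var, Ne.symm h],
    eq_of_coord_eq, finite_coord_ne_zero⟩

def basis : Module.Basis (Finset σ) R (SquarefreeQuotient σ R) := dualBases_prod_var.basis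

@[simp]
theorem basis_apply (S : Finset σ) : (basis S : SquarefreeQuotient σ R) = ∏ i ∈ S, var i := by
  simp [basis]

@[simp]
theorem basis_repr_apply (x : SquarefreeQuotient σ R) (S : Finset σ) :
    basis.repr x S = coord S x := by
  simp [basis]

theorem var_mul_self (i : σ) : (var i * var i : SquarefreeQuotient σ R) = 0 := by
  rw [← map_mul, Ideal.Quotient.eq_zero_iff_mem, ← sq]
  exact Ideal.subset_span ⟨i, rfl⟩

theorem prod_var_mul_var_of_mem [DecidableEq σ] {T : Finset σ} {i : σ} (hi : i ∈ T) :
    (∏ j ∈ T, var j) * (var i : SquarefreeQuotient σ R) = 0 := by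
  rw [← mul_prod_erase T _ hi, mul_right_comm, var_mul_self, zero_mul]

theorem mem_span_prod_var_iff [DecidableEq σ] (T : Finset σ) (x : SquarefreeQuotient σ R) :
    x ∈ Ideal.span {∏ i ∈ T, var i} ↔ ∀ S, ¬ T ⊆ S → coord S x = 0 := by
  constructor
  · rintro hx S hTS
    obtain ⟨r, rfl⟩ := Ideal.mem_span_singleton'.mp hx
    rw [coord_mul_prod_var, if_neg hTS]
  · intro hx
    rw [← basis.linearCombination_repr x, Finsupp.linearCombination_apply]
    refine Submodule.finsuppSum_mem _ _ _ _ fun S hS => Submodule.smul_of_tower_mem _ _ ?_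
    have hTS : T ⊆ S := by
      by_contra hTS
      exact hS (by rw [basis_repr_apply, hx S hTS])
    rw [basis_apply, ← prod_sdiff hTS]
    exact Ideal.mul_mem_left _ _ (Ideal.mem_span_singleton_self _)

theorem annihilator_span_var [DecidableEq σ] (T : Finset σ) :
    (Ideal.span (var '' (T : Set σ))).annihilator =
      Ideal.span {(∏ i ∈ T, var i : SquarefreeQuotient σ R)} := by
  ext x
  have hann : x ∈ (Ideal.span (var '' (T : Set σ))).annihilator ↔ ∀ i ∈ T, x * var i = 0 := by
    simp [Ideal.span, Submodule.mem_annihilator_span]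
  rw [hann]
  constructor
  · intro hx
    refine (mem_span_prod_var_iff T x).mpr fun S hTS => ?_
    obtain ⟨i, hiT, hiS⟩ := not_subset.mp hTS
    have := coord_mul_prod_var x (insert i S) {i}
    rwa [prod_singleton, hx i hiT, map_zero, if_pos (by simp), sdiff_singleton_eq_erase,
      erase_insert hiS, eq_comm] at this
  · rintro hx i hi
    obtain ⟨r, rfl⟩ := Ideal.mem_span_singleton'.mp hx
    rw [mul_assoc, prod_var_mul_var_of_mem hi, mul_zero]

theorem natCard_span_prod_var [Fintype σ] [DecidableEq σ] (T : Finset σ) :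
    Nat.card (Ideal.span {(∏ i ∈ T, var i : SquarefreeQuotient σ R)}) =
      Nat.card R ^ 2 ^ (Fintype.card σ - #T) := by
  have hrepr : Ideal.span {∏ i ∈ T, var i} ≃ Finsupp.supported R R {S : Finset σ | T ⊆ S} :=
    basis.repr.toEquiv.subtypeEquiv fun x => by
      simp [mem_span_prod_var_iff, Finsupp.mem_supported']
  rw [Nat.card_congr ((hrepr.trans (Finsupp.supportedEquivFinsupp _).toEquiv).trans
    Finsupp.equivFunOnFinite), Nat.card_fun, natCard_supersets]

end SquarefreeQuotient

end

theorem annihilator_ideal_span_uvars (k : ℕ) (T : Finset (Fin k)) :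
    (Ideal.span ((uvar k) '' (T : Set (Fin k)))).annihilator =
      Ideal.span {∏ i ∈ T, uvar k i} ∧
    Nat.card ↥(Ideal.span {∏ i ∈ T, uvar k i}) = 2 ^ (2 ^ (k - T.card)) := by
  refine ⟨SquarefreeQuotient.annihilator_span_var T, ?_⟩
  refine (SquarefreeQuotient.natCard_span_prod_var T).trans ?_
  simp
end

section
/- Let R be a finite commutative local Frobenius ring with residue field F_q, and let C_1, C_2 be linear codes of length n over R with generator matrices G_1, G_2 and parity-check matrices H_1, H_2 (generator matrices of the duals). Then dim(C_1 ∩ C_2) = dim(C_1) − Rank_q(H_2 G_1ᵀ). -/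
/-- The dual code of a linear code `C ⊆ Rⁿ` with respect to the standard inner product. -/
def dualCode {R : Type*} [CommRing R] {n : ℕ} (C : Submodule R (Fin n → R)) :
    Submodule R (Fin n → R) where
  carrier := {u | ∀ c ∈ C, ∑ i, u i * c i = 0}
  zero_mem' := by intro c hc; simp
  add_mem' := by
    intro a b ha hb c hc
    have := ha c hc
    have := hb c hc
    simp only [Pi.add_apply, add_mul, Finset.sum_add_distrib, *, add_zero]
  smul_mem' := by
    intro r a ha c hc
    have h := ha c hc
    simp only [Pi.smul_apply, smul_eq_mul, mul_assoc, ← Finset.mul_sum, h, mul_zero]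


/-- `Rank_q` of a matrix: `log_q` of the cardinality of its row span. -/
noncomputable def rankq {R : Type*} [CommRing R] {m k : ℕ} (q : ℕ)
    (M : Matrix (Fin m) (Fin k) R) : ℝ :=
  Real.logb q (Nat.card ↥(Submodule.span R (Set.range M)))

/-!
Since `R` is self-injective, `Hom(-, R)` is exact, and on a simple module `k` every functional is
a multiple of an embedding `k ↪ R`; by induction on a composition series `|Hom(M, R)| = |M|` for
every finite `M`. Applied to `M = Rⁿ / C` this gives `|C^⊥| · |C| = |R|ⁿ`.

The rows of `H₂ G₁ᵀ` are the images `G₁ u` of the generators `u` of `C₂^⊥`, so `u ↦ G₁ u` maps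
`C₂^⊥` onto the row span of `H₂ G₁ᵀ`, with kernel `C₁^⊥ ∩ C₂^⊥ = (C₁ + C₂)^⊥`. Counting,
`|C₁ + C₂| = |C₂| · |rowspan (H₂ G₁ᵀ)|`, and `|C₁ + C₂| · |C₁ ∩ C₂| = |C₁| · |C₂|` finishes.
-/

open IsLocalRing
open scoped Matrix

theorem Submodule.card_eq_card_inf_ker_mul_card_map {R M N : Type*} [Ring R] [AddCommGroup M]
    [Module R M] [AddCommGroup N] [Module R N] (f : M →ₗ[R] N) (p : Submodule R M) :
    Nat.card p = Nat.card ↥(p ⊓ LinearMap.ker f) * Nat.card (p.map f) := by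
  have hker : LinearMap.ker (f.domRestrict p) = (p ⊓ LinearMap.ker f).comap p.subtype := by
    rw [LinearMap.ker_domRestrict, Submodule.comap_inf, Submodule.comap_subtype_self, top_inf_eq]
  rw [card_eq_card_quotient_mul_card (LinearMap.ker (f.domRestrict p)),
    Nat.card_congr (f.domRestrict p).quotKerEquivRange.toEquiv, LinearMap.range_domRestrict, hker,
    Nat.card_congr (Submodule.comapSubtypeEquivOfLe inf_le_left).toEquiv]

theorem Submodule.card_sup_mul_card_inf {R M : Type*} [Ring R] [AddCommGroup M] [Module R M]
    (p p' : Submodule R M) :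
    Nat.card ↥(p ⊔ p') * Nat.card ↥(p ⊓ p') = Nat.card p * Nat.card p' := by
  have hsup := (p ⊔ p').card_eq_card_inf_ker_mul_card_map p.mkQ
  have hp' := p'.card_eq_card_inf_ker_mul_card_map p.mkQ
  rw [Submodule.ker_mkQ, inf_of_le_right le_sup_left, Submodule.map_sup, Submodule.mkQ_map_self,
    bot_sup_eq] at hsup
  rw [Submodule.ker_mkQ, inf_comm] at hp'
  rw [hsup, hp']
  ring

section SelfInjective

variable {R : Type*} [CommRing R]

theorem exists_injective_linearMap_of_isSimpleModule [IsLocalRing R] [Finite R]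
    (M : Type*) [AddCommGroup M] [Module R M] [IsSimpleModule R M] :
    ∃ φ : M →ₗ[R] R, Function.Injective φ := by
  obtain ⟨I, hI, -⟩ := (eq_bot_or_exists_atom_le (⊤ : Ideal R)).resolve_left top_ne_bot
  have : IsSimpleModule R I := isSimpleModule_iff_isAtom.mpr hI
  obtain ⟨m₁, hm₁, ⟨e₁⟩⟩ := (isSimpleModule_iff_quot_maximal (R := R) (M := M)).mp ‹_›
  obtain ⟨m₂, hm₂, ⟨e₂⟩⟩ := (isSimpleModule_iff_quot_maximal (R := R) (M := I)).mp ‹_›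
  obtain rfl := (eq_maximalIdeal hm₁).trans (eq_maximalIdeal hm₂).symm
  exact ⟨I.subtype ∘ₗ (e₁.trans e₂.symm).toLinearMap,
    I.injective_subtype.comp (e₁.trans e₂.symm).injective⟩

theorem card_dual_of_isSimpleModule (hR : Module.Injective R R)
    (M : Type*) [AddCommGroup M] [Module R M] [IsSimpleModule R M]
    {φ : M →ₗ[R] R} (hφ : Function.Injective φ) :
    Nat.card (Module.Dual R M) = Nat.card M := by
  set Φ := LinearMap.toSpanSingleton R (Module.Dual R M) φ
  -- every functional extends along `φ` to an endomorphism of `R`, so it is a multiple of `φ`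
  have hΦ : Function.Surjective Φ := by
    intro ψ
    obtain ⟨h, hh⟩ := Module.Injective.extension_property R R M R φ hφ ψ
    refine ⟨h 1, LinearMap.ext fun x => ?_⟩
    rw [← hh, LinearMap.comp_apply, LinearMap.toSpanSingleton_apply, LinearMap.smul_apply,
      smul_eq_mul, mul_comm, ← smul_eq_mul, ← map_smul, smul_eq_mul, mul_one]
  have hker : LinearMap.ker Φ = Module.annihilator R M := by
    ext r
    simp only [LinearMap.mem_ker, LinearMap.ext_iff, Module.mem_annihilator]
    refine forall_congr' fun x => ?_
    rw [LinearMap.toSpanSingleton_apply, LinearMap.smul_apply, LinearMap.zero_apply, ← map_smul,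
      map_eq_zero_iff φ hφ]
  obtain ⟨I, -, ⟨e⟩⟩ := (isSimpleModule_iff_quot_maximal (R := R) (M := M)).mp ‹_›
  rw [e.annihilator_eq, Ideal.annihilator_quotient] at hker
  rw [Nat.card_congr e.toEquiv, ← hker,
    ← Nat.card_congr (LinearMap.quotKerEquivOfSurjective Φ hΦ).toEquiv]

theorem card_dual_eq_card [IsLocalRing R] [Finite R] (hR : Module.Injective R R)
    (M : Type*) [AddCommGroup M] [Module R M] [Finite M] :
    Nat.card (Module.Dual R M) = Nat.card M := by
  induction h : Nat.card M using Nat.strong_induction_on generalizing M with | _ c ih =>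
  subst h
  rcases subsingleton_or_nontrivial M with hM | hM
  · rw [Nat.card_of_subsingleton (0 : Module.Dual R M), Nat.card_of_subsingleton (0 : M)]
  obtain ⟨N, hN, -⟩ := (eq_bot_or_exists_atom_le (⊤ : Submodule R M)).resolve_left top_ne_bot
  have : IsSimpleModule R N := isSimpleModule_iff_isAtom.mpr hN
  have hMN : Nat.card M = Nat.card N * Nat.card (M ⧸ N) := N.card_eq_card_quotient_mul_card
  have hquot : Nat.card (Module.Dual R (M ⧸ N)) = Nat.card (M ⧸ N) := by
    have : Nontrivial N := IsSimpleModule.nontrivial R N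
    have : Finite (M ⧸ N) := Finite.of_surjective _ N.mkQ_surjective
    refine ih _ ?_ _ rfl
    rw [hMN]
    exact lt_mul_left Nat.card_pos Finite.one_lt_card
  have hsub : Nat.card (Module.Dual R N) = Nat.card N := by
    obtain ⟨φ, hφ⟩ := exists_injective_linearMap_of_isSimpleModule (R := R) N
    exact card_dual_of_isSimpleModule hR N hφ
  -- `Dual (M ⧸ N) → Dual M → Dual N → 0` is exact, the last map being onto since `R` is injective
  have hrestrict : LinearMap.range N.dualRestrict = ⊤ := by
    refine LinearMap.range_eq_top.mpr fun g => ?_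
    obtain ⟨h, hh⟩ := Module.Injective.extension_property R R N M N.subtype N.injective_subtype g
    exact ⟨h, hh⟩
  rw [(LinearMap.ker N.dualRestrict).card_eq_card_quotient_mul_card,
    Nat.card_congr N.dualRestrict.quotKerEquivRange.toEquiv, hrestrict,
    Nat.card_congr Submodule.topEquiv.toEquiv, Submodule.dualRestrict_ker_eq_dualAnnihilator,
    ← Nat.card_congr N.dualQuotEquivDualAnnihilator.toEquiv, hquot, hsub, hMN, mul_comm]

end SelfInjective

section LinearCode

variable {R : Type*} [CommRing R] {n : ℕ}

theorem dualCode_eq_comap_dualAnnihilator (C : Submodule R (Fin n → R)) :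
    dualCode C = C.dualAnnihilator.comap (dotProductEquiv R (Fin n)).toLinearMap := by
  ext u
  simp only [Submodule.mem_comap, Submodule.mem_dualAnnihilator]
  rfl

theorem dualCode_sup (C₁ C₂ : Submodule R (Fin n → R)) :
    dualCode (C₁ ⊔ C₂) = dualCode C₁ ⊓ dualCode C₂ := by
  simp only [dualCode_eq_comap_dualAnnihilator, Submodule.dualAnnihilator_sup_eq,
    Submodule.comap_inf]

theorem mem_dualCode_span_iff {S : Set (Fin n → R)} {u : Fin n → R} :
    u ∈ dualCode (Submodule.span R S) ↔ ∀ s ∈ S, u ⬝ᵥ s = 0 := by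
  rw [dualCode_eq_comap_dualAnnihilator, Submodule.mem_comap, Submodule.mem_dualAnnihilator]
  exact ⟨fun h s hs => h s (Submodule.subset_span hs),
    fun h w hw =>
      (Submodule.span_le (p := LinearMap.ker (dotProductEquiv R (Fin n) u))).mpr h hw⟩

theorem card_dualCode_mul_card [IsLocalRing R] [Finite R] (hR : Module.Injective R R)
    (C : Submodule R (Fin n → R)) :
    Nat.card (dualCode C) * Nat.card C = Nat.card (Fin n → R) := by
  have : Finite ((Fin n → R) ⧸ C) := Finite.of_surjective _ C.mkQ_surjective
  rw [dualCode_eq_comap_dualAnnihilator, Submodule.comap_equiv_eq_map_symm,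
    ← Nat.card_congr ((dotProductEquiv R (Fin n)).symm.submoduleMap _).toEquiv,
    ← Nat.card_congr C.dualQuotEquivDualAnnihilator.toEquiv, card_dual_eq_card hR,
    C.card_eq_card_quotient_mul_card, mul_comm]

theorem Matrix.ker_mulVecLin_eq_dualCode {ι : Type*} (G : Matrix ι (Fin n) R) :
    LinearMap.ker G.mulVecLin = dualCode (Submodule.span R (Set.range G)) := by
  ext v
  simp only [LinearMap.mem_ker, mem_dualCode_span_iff, Matrix.mulVecLin_apply, funext_iff,
    Matrix.mulVec, Pi.zero_apply, dotProduct_comm v]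
  exact (Set.forall_mem_range (f := (G : ι → Fin n → R)) (p := fun s => s ⬝ᵥ v = 0)).symm

theorem Matrix.map_mulVecLin_span_range {ι κ : Type*} (G : Matrix ι (Fin n) R)
    (H : Matrix κ (Fin n) R) :
    (Submodule.span R (Set.range H)).map G.mulVecLin = Submodule.span R (Set.range (H * Gᵀ)) := by
  rw [Submodule.map_span, ← Set.range_comp (f := (H : κ → Fin n → R))]
  congr 2
  funext j
  show G *ᵥ H j = H j ᵥ* Gᵀ
  rw [Matrix.vecMul_transpose]

theorem card_eq_card_inf_mul_card_span [IsLocalRing R] [Finite R] (hR : Module.Injective R R)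
    {k m : ℕ} {C₁ C₂ : Submodule R (Fin n → R)} {G₁ : Matrix (Fin k) (Fin n) R}
    {H₂ : Matrix (Fin m) (Fin n) R} (hG₁ : Submodule.span R (Set.range G₁) = C₁)
    (hH₂ : Submodule.span R (Set.range H₂) = dualCode C₂) :
    Nat.card C₁ = Nat.card ↥(C₁ ⊓ C₂) * Nat.card (Submodule.span R (Set.range (H₂ * G₁ᵀ))) := by
  have hdual := (dualCode C₂).card_eq_card_inf_ker_mul_card_map G₁.mulVecLin
  rw [G₁.ker_mulVecLin_eq_dualCode, hG₁, inf_comm, ← dualCode_sup, ← hH₂,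
    G₁.map_mulVecLin_span_range, hH₂] at hdual
  have hsup : Nat.card ↥(C₁ ⊔ C₂) =
      Nat.card (Submodule.span R (Set.range (H₂ * G₁ᵀ))) * Nat.card C₂ := by
    refine Nat.eq_of_mul_eq_mul_left (Nat.card_pos (α := dualCode (C₁ ⊔ C₂))) ?_
    rw [card_dualCode_mul_card hR, ← card_dualCode_mul_card hR C₂, hdual, mul_assoc]
  refine Nat.eq_of_mul_eq_mul_right (Nat.card_pos (α := C₂)) ?_
  rw [← Submodule.card_sup_mul_card_inf, hsup]
  ring

end LinearCode

theorem dim_inter_eq_dim_sub_rank_general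
    (R : Type*) [CommRing R] [Fintype R] [IsLocalRing R]
    (hFrob : Module.Injective R R)
    (q n k₁ m₂ : ℕ)
    (C₁ C₂ : Submodule R (Fin n → R))
    (G₁ : Matrix (Fin k₁) (Fin n) R)
    (H₂ : Matrix (Fin m₂) (Fin n) R)
    (hG₁ : Submodule.span R (Set.range G₁) = C₁)
    (hH₂ : Submodule.span R (Set.range H₂) = dualCode C₂) :
    Real.logb q (Nat.card ↥(C₁ ⊓ C₂)) =
      Real.logb q (Nat.card C₁) - rankq q (H₂ * G₁.transpose) := by
  rw [rankq, card_eq_card_inf_mul_card_span hFrob hG₁ hH₂, Nat.cast_mul,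
    Real.logb_mul (Nat.cast_ne_zero.mpr Nat.card_pos.ne') (Nat.cast_ne_zero.mpr Nat.card_pos.ne')]
  ring

theorem dim_inter_eq_dim_sub_rank
    (R : Type*) [CommRing R] [Fintype R] [IsLocalRing R]
    (hFrob : Module.Injective R R)
    (q n k₁ k₂ m₁ m₂ : ℕ) (hq : q = Nat.card (IsLocalRing.ResidueField R))
    (C₁ C₂ : Submodule R (Fin n → R))
    (G₁ : Matrix (Fin k₁) (Fin n) R) (G₂ : Matrix (Fin k₂) (Fin n) R)
    (H₁ : Matrix (Fin m₁) (Fin n) R) (H₂ : Matrix (Fin m₂) (Fin n) R)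
    (hG₁ : Submodule.span R (Set.range G₁) = C₁)
    (hG₂ : Submodule.span R (Set.range G₂) = C₂)
    (hH₁ : Submodule.span R (Set.range H₁) = dualCode C₁)
    (hH₂ : Submodule.span R (Set.range H₂) = dualCode C₂) :
    Real.logb q (Nat.card ↥(C₁ ⊓ C₂)) =
      Real.logb q (Nat.card C₁) - rankq q (H₂ * G₁.transpose) :=
  dim_inter_eq_dim_sub_rank_general R hFrob q n k₁ m₂ C₁ C₂ G₁ H₂ hG₁ hH₂
end

section
/- Let R be a finite chain ring with nilpotency index t and residue field F_q, and let C_1, C_2 be free λ-constacyclic codes of length n over R with Ψ(C_i) = ⟨F_i⟩ where F_i divides x^n − λ in R[x]. Then C_1 + C_2 = R^n if and only if lcm(F_1, F_2) = F_1 F_2 (up to units), i.e., F_1 and F_2 are coprime. Moreover C_1 ∩ C_2 = {0} with C_1 + C_2 = R^n (i.e., {C_1, C_2} is a linear complementary pair) if and only if additionally deg(F_1) + deg(F_2) = n. -/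
/-!
Both `F₁` and `F₂` divide `M = xⁿ - λ`, so a Bézout relation for their images in `R[x]/(M)` lifts
to one in `R[x]`: the multiple of `M` is absorbed into the coefficient of `F₁`. Hence
`⟨F₁⟩ + ⟨F₂⟩` is the whole ring exactly when `F₁` and `F₂` are coprime. For comaximal ideals the
intersection is the product `⟨F₁ F₂⟩`, which vanishes iff `M ∣ F₁ F₂`; since the monic polynomial
`F₁ F₂` already divides the monic `M`, this happens iff `F₁ F₂ = M`, i.e. iff
`deg F₁ + deg F₂ = n`.
-/

open Polynomial

/-- The ambient ring `R[x]/(xⁿ - λ)` of λ-constacyclic codes of length `n`. -/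
def ConstaAmbient (R : Type*) [CommRing R] (n : ℕ) (lam : R) : Type _ :=
  Polynomial R ⧸ Ideal.span {(X : Polynomial R) ^ n - Polynomial.C lam}

noncomputable instance (R : Type*) [CommRing R] (n : ℕ) (lam : R) :
    CommRing (ConstaAmbient R n lam) := Ideal.Quotient.commRing _

theorem Ideal.Quotient.isCoprime_mk_span_singleton_iff_of_dvd {A : Type*} [CommRing A]
    {a b m : A} (ha : a ∣ m) :
    IsCoprime (Ideal.Quotient.mk (Ideal.span {m}) a) (Ideal.Quotient.mk (Ideal.span {m}) b) ↔
      IsCoprime a b := by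
  refine ⟨fun ⟨u, v, huv⟩ => ?_, fun h => h.map _⟩
  obtain ⟨u, rfl⟩ := Ideal.Quotient.mk_surjective u
  obtain ⟨v, rfl⟩ := Ideal.Quotient.mk_surjective v
  obtain ⟨c, hc⟩ : m ∣ u * a + v * b - 1 := by
    rw [← Ideal.Quotient.eq_zero_iff_dvd, map_sub, sub_eq_zero]
    simpa only [map_add, map_mul, map_one] using huv
  obtain ⟨g, rfl⟩ := ha
  exact ⟨u - g * c, v, by linear_combination hc⟩

theorem Ideal.span_singleton_inf_span_singleton_eq_bot_iff {S : Type*} [CommSemiring S] {x y : S}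
    (h : IsCoprime x y) : Ideal.span {x} ⊓ Ideal.span {y} = ⊥ ↔ x * y = 0 := by
  rw [← Ideal.mul_eq_inf_of_isCoprime ((Ideal.isCoprime_span_singleton_iff x y).mpr h),
    Ideal.span_singleton_mul_span_singleton, Ideal.span_singleton_eq_bot]

namespace Polynomial

variable {R : Type*} [Semiring R] {p q : R[X]}

theorem Monic.natDegree_le_of_dvd (hp : p.Monic) (hq : q ≠ 0) (h : p ∣ q) :
    p.natDegree ≤ q.natDegree := by
  obtain ⟨g, rfl⟩ := h
  rw [hp.natDegree_mul' (right_ne_zero_of_mul hq)]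
  exact Nat.le_add_right _ _

theorem Monic.dvd_iff_natDegree_eq [Nontrivial R] (hp : p.Monic) (hq : q.Monic) (hpq : p ∣ q) :
    q ∣ p ↔ p.natDegree = q.natDegree := by
  refine ⟨fun hqp => (hp.natDegree_le_of_dvd hq.ne_zero hpq).antisymm
    (hq.natDegree_le_of_dvd hp.ne_zero hqp), fun h => ?_⟩
  rw [eq_of_monic_of_dvd_of_natDegree_le hp hq hpq h.ge]

end Polynomial

theorem free_constacyclic_sum_and_lcp_general
    (R : Type*) [CommRing R] [IsLocalRing R]
    (n : ℕ)
    (lam : R) (hn : 0 < n)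
    (F₁ F₂ : Polynomial R) (hm₁ : F₁.Monic) (hm₂ : F₂.Monic)
    (hd₁ : F₁ ∣ (X : Polynomial R) ^ n - Polynomial.C lam)
    (hd₂ : F₂ ∣ (X : Polynomial R) ^ n - Polynomial.C lam)
    (I₁ I₂ : Ideal (ConstaAmbient R n lam))
    (hI₁ : I₁ = Ideal.span {(Ideal.Quotient.mk _ F₁ : ConstaAmbient R n lam)})
    (hI₂ : I₂ = Ideal.span {(Ideal.Quotient.mk _ F₂ : ConstaAmbient R n lam)}) :
    (I₁ ⊔ I₂ = ⊤ ↔ IsCoprime F₁ F₂) ∧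
    ((I₁ ⊓ I₂ = ⊥ ∧ I₁ ⊔ I₂ = ⊤) ↔
      (IsCoprime F₁ F₂ ∧ F₁.natDegree + F₂.natDegree = n)) := by
  have hM : ((X : R[X]) ^ n - C lam).Monic := monic_X_pow_sub_C lam hn.ne'
  subst hI₁ hI₂
  have hsup : Ideal.span {(Ideal.Quotient.mk _ F₁ : ConstaAmbient R n lam)} ⊔
      Ideal.span {(Ideal.Quotient.mk _ F₂ : ConstaAmbient R n lam)} = ⊤ ↔ IsCoprime F₁ F₂ :=
    Ideal.isCoprime_iff_sup_eq.symm.trans <| (Ideal.isCoprime_span_singleton_iff _ _).trans <|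
      Ideal.Quotient.isCoprime_mk_span_singleton_iff_of_dvd hd₁
  have hinf (hcop : IsCoprime F₁ F₂) :
      Ideal.span {(Ideal.Quotient.mk _ F₁ : ConstaAmbient R n lam)} ⊓
        Ideal.span {(Ideal.Quotient.mk _ F₂ : ConstaAmbient R n lam)} = ⊥ ↔
        F₁.natDegree + F₂.natDegree = n := by
    rw [Ideal.span_singleton_inf_span_singleton_eq_bot_iff (hcop.map _), ← map_mul,
      Ideal.Quotient.eq_zero_iff_dvd, (hm₁.mul hm₂).dvd_iff_natDegree_eq hM
      (hcop.mul_dvd hd₁ hd₂), hm₁.natDegree_mul hm₂, natDegree_X_pow_sub_C]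
  exact ⟨hsup, and_comm.trans <|
    (and_congr_right fun htop => hinf (hsup.mp htop)).trans (and_congr_left' hsup)⟩

theorem free_constacyclic_sum_and_lcp
    (R : Type*) [CommRing R] [Fintype R] [IsLocalRing R]
    (γ : R) (t q n : ℕ)
    (hγ : IsLocalRing.maximalIdeal R = Ideal.span {γ})
    (ht : γ ^ t = 0) (ht' : γ ^ (t - 1) ≠ 0)
    (hq : q = Nat.card (IsLocalRing.ResidueField R))
    (lam : R) (hlam : IsUnit lam) (hn : 0 < n)
    (F₁ F₂ : Polynomial R) (hm₁ : F₁.Monic) (hm₂ : F₂.Monic)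
    (hd₁ : F₁ ∣ (X : Polynomial R) ^ n - Polynomial.C lam)
    (hd₂ : F₂ ∣ (X : Polynomial R) ^ n - Polynomial.C lam)
    (I₁ I₂ : Ideal (ConstaAmbient R n lam))
    (hI₁ : I₁ = Ideal.span {(Ideal.Quotient.mk _ F₁ : ConstaAmbient R n lam)})
    (hI₂ : I₂ = Ideal.span {(Ideal.Quotient.mk _ F₂ : ConstaAmbient R n lam)}) :
    (I₁ ⊔ I₂ = ⊤ ↔ IsCoprime F₁ F₂) ∧
    ((I₁ ⊓ I₂ = ⊥ ∧ I₁ ⊔ I₂ = ⊤) ↔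
      (IsCoprime F₁ F₂ ∧ F₁.natDegree + F₂.natDegree = n)) :=
  free_constacyclic_sum_and_lcp_general R n lam hn F₁ F₂ hm₁ hm₂ hd₁ hd₂ I₁ I₂ hI₁ hI₂
end

section
/- Let R be a finite chain ring with residue map π : R → F_q, let λ_1, λ_2 be units of R with π(λ_1) ≠ π(λ_2), and let C_i be a free λ_i-constacyclic code of length n over R for i = 1,2, such that C_1 ∩ C_2 is both λ_1-constacyclic and λ_2-constacyclic. Then C_1 ∩ C_2 = R^n or C_1 ∩ C_2 = {0}. -/
/-!
Subtracting the two constashifts of a word `x ∈ C₁ ⊓ C₂` leaves `(λ₁ - λ₂) x_{n-1} e₀`, and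
`λ₁ - λ₂` is a unit; shifting further, a nonzero intersection contains `c eᵢ` for some `c ≠ 0`
and every `i`. In a chain ring `(c)` is the annihilator of some `a`. In a free code `C` the
coordinates of `c eᵢ` are killed by `a`, so `c eᵢ = c wᵢ` with `wᵢ ∈ C`; then `eᵢ - wᵢ` is
killed by `c ≠ 0`, so its coordinates lie in the maximal ideal, and Nakayama gives `C = Rⁿ`.
Hence both codes, and their intersection, are all of `Rⁿ`.
-/

/-- The `λ`-constashift `(x₀,…,x_{n-1}) ↦ (λ x_{n-1}, x₀, …, x_{n-2})`. -/
def constashift {R : Type*} [CommRing R] {n : ℕ} (hn : 0 < n) (lam : R)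
    (x : Fin n → R) : Fin n → R :=
  fun i => if (i : ℕ) = 0 then lam * x ⟨n - 1, Nat.sub_lt hn Nat.one_pos⟩
           else x ⟨(i : ℕ) - 1, lt_of_le_of_lt (Nat.sub_le _ 1) i.isLt⟩

open IsLocalRing

namespace IsLocalRing

variable {R : Type*} [CommRing R] [IsLocalRing R]

theorem exists_isUnit_mul_pow_of_notMem_span_pow {π : R}
    (hπ : maximalIdeal R = Ideal.span {π}) {x : R} {k : ℕ} (hx : x ∉ Ideal.span {π ^ k}) :
    ∃ u s, IsUnit u ∧ x = u * π ^ s := by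
  induction k generalizing x with
  | zero => simp at hx
  | succ k ih =>
    by_cases hxu : IsUnit x
    · exact ⟨x, 0, hxu, by simp⟩
    obtain ⟨y, rfl⟩ : π ∣ x := by
      rw [← Ideal.mem_span_singleton, ← hπ]
      exact (mem_maximalIdeal x).mpr hxu
    have hy : y ∉ Ideal.span {π ^ k} := fun hy ↦ hx <| by
      rw [pow_succ', Ideal.mem_span_singleton] at *
      exact mul_dvd_mul_left π hy
    obtain ⟨u, s, hu, rfl⟩ := ih hy
    exact ⟨u, s + 1, hu, by ring⟩

/-- Writing `c = u π ^ s`, the witness is `π ^ (e - s)` with `e` the nilpotency index of `π`. -/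
theorem exists_forall_mul_eq_zero_iff_dvd [IsArtinianRing R] [IsPrincipalIdealRing R]
    {c : R} (hc : c ≠ 0) : ∃ a : R, ∀ r, a * r = 0 ↔ c ∣ r := by
  obtain ⟨π, hπ⟩ := (IsPrincipalIdealRing.principal (maximalIdeal R)).principal
  have hnil : IsNilpotent π :=
    Ring.KrullDimLE.isNilpotent_iff_mem_maximalIdeal.mpr (hπ ▸ Ideal.mem_span_singleton_self π)
  set e := nilpotencyClass π
  have hπe : π ^ e = 0 := pow_nilpotencyClass hnil
  have factor : ∀ x : R, x ≠ 0 → ∃ u s, IsUnit u ∧ x = u * π ^ s := fun x hx ↦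
    exists_isUnit_mul_pow_of_notMem_span_pow hπ (k := e) (by simpa [hπe] using hx)
  obtain ⟨u, s, hu, rfl⟩ := factor c hc
  have hse : s < e := by
    by_contra! hes
    exact hc (by rw [pow_eq_zero_of_le hes hπe, mul_zero])
  refine ⟨π ^ (e - s), fun r ↦ ⟨fun hr ↦ ?_, ?_⟩⟩
  · rcases eq_or_ne r 0 with rfl | hr0
    · exact dvd_zero _
    obtain ⟨v, t, hv, rfl⟩ := factor r hr0
    have hzero : π ^ (e - s + t) = 0 := by
      rwa [mul_left_comm, hv.mul_right_eq_zero, ← pow_add] at hr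
    have hst : s ≤ t := by
      have : e ≤ e - s + t := Nat.sInf_le hzero
      omega
    rw [mul_comm u, hu.mul_right_dvd]
    exact (pow_dvd_pow π hst).mul_left v
  · rintro ⟨k, rfl⟩
    calc π ^ (e - s) * (u * π ^ s * k) = u * π ^ (e - s + s) * k := by ring
      _ = 0 := by rw [Nat.sub_add_cancel hse.le, hπe, mul_zero, zero_mul]

end IsLocalRing

theorem Module.Free.exists_eq_smul_of_smul_eq_zero {R F : Type*} [CommRing R] [AddCommGroup F]
    [Module R F] [Module.Free R F] {a c : R} (hac : ∀ r, a * r = 0 → c ∣ r) {v : F}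
    (hv : a • v = 0) : ∃ w, v = c • w := by
  let b := Module.Free.chooseBasis R F
  have hcoord : ∀ i, c ∣ b.repr v i := fun i ↦ hac _ <| by
    simpa using congrArg (fun z ↦ b.repr z i) hv
  choose g hg using hcoord
  refine ⟨∑ i ∈ (b.repr v).support, g i • b i, ?_⟩
  calc v = (b.repr v).sum fun i r ↦ r • b i := (b.linearCombination_repr v).symm
    _ = _ := by simp only [Finsupp.sum, hg, mul_smul, Finset.smul_sum]

theorem Submodule.mem_ideal_smul_top_of_forall_mem {R ι : Type*} [CommRing R] [Fintype ι]
    {I : Ideal R} {x : ι → R} (hx : ∀ j, x j ∈ I) : x ∈ I • (⊤ : Submodule R (ι → R)) := by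
  classical
  rw [pi_eq_sum_univ x]
  exact Submodule.sum_mem _ fun j _ ↦ Submodule.smul_mem_smul (hx j) Submodule.mem_top

theorem Submodule.eq_top_of_free_of_single_mem {R ι : Type*} [CommRing R] [IsLocalRing R]
    [Fintype ι] [DecidableEq ι] {C : Submodule R (ι → R)} [Module.Free R C] {a c : R}
    (hc : c ≠ 0) (hann : ∀ r, a * r = 0 ↔ c ∣ r) (hsingle : ∀ i, Pi.single i c ∈ C) :
    C = ⊤ := by
  refine eq_top_iff.mpr <| Submodule.le_of_le_smul_of_le_jacobson_bot Module.Finite.fg_top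
    (maximalIdeal_le_jacobson ⊥) ?_
  calc ⊤ = span R (Set.range (Pi.basisFun R ι)) := (Pi.basisFun R ι).span_eq.symm
    _ ≤ _ := span_le.mpr ?_
  rintro _ ⟨i, rfl⟩
  obtain ⟨w, hw⟩ := Module.Free.exists_eq_smul_of_smul_eq_zero (fun r ↦ (hann r).mp)
    (v := (⟨Pi.single i c, hsingle i⟩ : C)) <| by
      ext j
      simp [Pi.single_apply, (hann c).mpr dvd_rfl]
  set y : ι → R := Pi.single i 1 - (w : ι → R)
  have hcy : c • y = 0 := by
    have hw' := congrArg Subtype.val hw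
    simp only [SetLike.val_smul] at hw'
    rw [smul_sub, ← hw', ← Pi.single_smul, smul_eq_mul, mul_one, sub_self]
  have hy : ∀ j, y j ∈ maximalIdeal R := fun j ↦ (mem_maximalIdeal _).mpr fun hu ↦
    hc (hu.mul_left_eq_zero.mp (congrFun hcy j))
  rw [SetLike.mem_coe, Pi.basisFun_apply]
  exact Submodule.mem_sup.mpr ⟨w, w.2, y, Submodule.mem_ideal_smul_top_of_forall_mem hy,
    add_sub_cancel (w : ι → R) _⟩

section Constashift

variable {R : Type*} [CommRing R] {n : ℕ} (hn : 0 < n)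

theorem constashift_apply_of_ne_zero (lam : R) (x : Fin n → R) {i : Fin n} (hi : (i : ℕ) ≠ 0) :
    constashift hn lam x i = x ⟨i - 1, by omega⟩ :=
  if_neg hi

theorem constashift_sub_constashift (lam₁ lam₂ : R) (x : Fin n → R) :
    constashift hn lam₁ x - constashift hn lam₂ x =
      Pi.single ⟨0, hn⟩ ((lam₁ - lam₂) * x ⟨n - 1, by omega⟩) := by
  ext ⟨i, hi⟩
  rcases eq_or_ne i 0 with rfl | hi0
  · simp [constashift, sub_mul]
  · simp [constashift_apply_of_ne_zero hn _ _ (i := ⟨i, hi⟩) hi0, hi0]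

theorem iterate_constashift_apply (lam : R) (x : Fin n → R) {k : ℕ} {i j : Fin n}
    (h : (j : ℕ) + k = i) : (constashift hn lam)^[k] x i = x j := by
  induction k generalizing i with
  | zero =>
    obtain rfl : i = j := Fin.ext (by omega)
    rfl
  | succ k ih =>
    rw [Function.iterate_succ_apply', constashift_apply_of_ne_zero hn _ _ (by omega)]
    exact ih (by dsimp only; omega)

theorem constashift_single (lam c : R) {i j : Fin n} (h : (i : ℕ) + 1 = j) :
    constashift hn lam (Pi.single i c) = Pi.single j c := by
  ext m
  by_cases hm : (m : ℕ) = 0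
  · simp only [constashift, hm, Pi.single_apply, Fin.ext_iff, if_true]
    rw [if_neg (by omega), if_neg (by omega), mul_zero]
  · rw [constashift_apply_of_ne_zero hn _ _ hm]
    simp only [Pi.single_apply, Fin.ext_iff, show (m : ℕ) - 1 = i ↔ (m : ℕ) = j by omega]

theorem iterate_constashift_single (lam c : R) {k : ℕ} {i j : Fin n} (h : (i : ℕ) + k = j) :
    (constashift hn lam)^[k] (Pi.single i c) = Pi.single j c := by
  induction k generalizing j with
  | zero =>
    obtain rfl : i = j := Fin.ext (by omega)
    rfl
  | succ k ih =>
    rw [Function.iterate_succ_apply', ih (j := ⟨i + k, by omega⟩) rfl]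
    exact constashift_single hn lam c (by dsimp only; omega)

theorem Submodule.single_apply_mem_of_mapsTo_constashift {D : Submodule R (Fin n → R)}
    {lam₁ lam₂ : R} (hunit : IsUnit (lam₁ - lam₂))
    (h₁ : Set.MapsTo (constashift hn lam₁) D D) (h₂ : Set.MapsTo (constashift hn lam₂) D D)
    {x : Fin n → R} (hx : x ∈ D) (i j : Fin n) : Pi.single i (x j) ∈ D := by
  have hlast : ∀ y ∈ D, Pi.single ⟨0, hn⟩ (y ⟨n - 1, by omega⟩) ∈ D := by
    intro y hy
    have hdiff := D.sub_mem (h₁ hy) (h₂ hy)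
    rwa [constashift_sub_constashift, ← smul_eq_mul, Pi.single_smul',
      Submodule.smul_mem_iff_of_isUnit _ hunit] at hdiff
  have hfirst : Pi.single ⟨0, hn⟩ (x j) ∈ D := by
    have := hlast _ (h₁.iterate (n - 1 - j) hx)
    rwa [iterate_constashift_apply hn lam₁ x (j := j) (by dsimp only; omega)] at this
  have := h₁.iterate i hfirst
  rwa [iterate_constashift_single hn lam₁ (x j) (j := i) (zero_add _)] at this

end Constashift

theorem inter_of_constacyclic_different_units_general
    (R : Type*) [CommRing R] [Fintype R] [IsLocalRing R] [IsPrincipalIdealRing R]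
    {n : ℕ} (hn : 0 < n)
    (lam₁ lam₂ : R)
    (hres : IsLocalRing.residue R lam₁ ≠ IsLocalRing.residue R lam₂)
    (C₁ C₂ : Submodule R (Fin n → R))
    (hfree₁ : Module.Free R C₁) (hfree₂ : Module.Free R C₂)
    (hboth₁ : ∀ x ∈ C₁ ⊓ C₂, constashift hn lam₁ x ∈ C₁ ⊓ C₂)
    (hboth₂ : ∀ x ∈ C₁ ⊓ C₂, constashift hn lam₂ x ∈ C₁ ⊓ C₂) :
    C₁ ⊓ C₂ = ⊤ ∨ C₁ ⊓ C₂ = ⊥ := by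
  classical
  refine or_iff_not_imp_right.mpr fun hne ↦ ?_
  obtain ⟨x, hx, hx0⟩ := Submodule.exists_mem_ne_zero_of_ne_bot hne
  obtain ⟨j, hj⟩ : ∃ j, x j ≠ 0 := Function.ne_iff.mp hx0
  have hunit : IsUnit (lam₁ - lam₂) :=
    (residue_ne_zero_iff_isUnit _).mp (by rwa [map_sub, sub_ne_zero])
  have hsingle : ∀ i, Pi.single i (x j) ∈ C₁ ⊓ C₂ := fun i ↦
    Submodule.single_apply_mem_of_mapsTo_constashift hn hunit hboth₁ hboth₂ hx i j
  obtain ⟨a, ha⟩ := exists_forall_mul_eq_zero_iff_dvd hj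
  rw [Submodule.eq_top_of_free_of_single_mem hj ha fun i ↦ (hsingle i).1,
    Submodule.eq_top_of_free_of_single_mem hj ha fun i ↦ (hsingle i).2, inf_idem]

theorem inter_of_constacyclic_different_units
    (R : Type*) [CommRing R] [Fintype R] [IsLocalRing R] [IsPrincipalIdealRing R]
    {n : ℕ} (hn : 0 < n)
    (lam₁ lam₂ : R) (hu₁ : IsUnit lam₁) (hu₂ : IsUnit lam₂)
    (hres : IsLocalRing.residue R lam₁ ≠ IsLocalRing.residue R lam₂)
    (C₁ C₂ : Submodule R (Fin n → R))
    (hfree₁ : Module.Free R C₁) (hfree₂ : Module.Free R C₂)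
    (hc₁ : ∀ x ∈ C₁, constashift hn lam₁ x ∈ C₁)
    (hc₂ : ∀ x ∈ C₂, constashift hn lam₂ x ∈ C₂)
    (hboth₁ : ∀ x ∈ C₁ ⊓ C₂, constashift hn lam₁ x ∈ C₁ ⊓ C₂)
    (hboth₂ : ∀ x ∈ C₁ ⊓ C₂, constashift hn lam₂ x ∈ C₁ ⊓ C₂) :
    C₁ ⊓ C₂ = ⊤ ∨ C₁ ⊓ C₂ = ⊥ :=
  inter_of_constacyclic_different_units_general R hn lam₁ lam₂ hres C₁ C₂ hfree₁ hfree₂ hboth₁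
    hboth₂
end
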